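/- forb(5, F(0,8,1,0)) = 28; that is, the maximum cardinality of a family of subsets of {1,2,3,4,5} that avoids F(0,8,1,0) is exactly 28. -/

import Mathlib

/-!
A family avoiding `F(0,8,1,0)` on five points misses at least four sets. Otherwise its
complement `B` has at most three members, and a set `S` separates (`i ∈ S`, `j ∉ S`) only
`|S| (5 - |S|) ≤ 6` of the 20 ordered pairs of distinct points, so some pair `(i, j)` is
separated by no member of `B`. Then the family contains all `8` sets with `i ∈ Y`, `j ∉ Y`,
and, since `B` is too small to hold all `8` sets with `j ∈ X`, `i ∉ X`, one of those as well.
Conversely, removing four sets that together separate every ordered pair leaves an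
avoiding family of size `28`.
-/

open Finset

/-- A family `A` of distinct subsets of `Fin m` (columns of a simple `m`-rowed (0,1)-matrix)
avoids the configuration `F(0,p,1,0)`: for every ordered pair of distinct rows `i, j`,
if some member contains `j` but not `i`, then at most `p - 1` members contain `i` but not `j`. -/
def AvoidsF010 (p m : ℕ) (A : Finset (Finset (Fin m))) : Prop :=
  ∀ i j : Fin m, i ≠ j →
    (∃ X ∈ A, j ∈ X ∧ i ∉ X) →
    (A.filter fun Y => i ∈ Y ∧ j ∉ Y).card ≤ p - 1

/-- `forb m p` is the maximum cardinality of a family of subsets of an `m`-element ground set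
avoiding the configuration `F(0,p,1,0)`. -/
noncomputable def forb (m p : ℕ) : ℕ :=
  sSup {n | ∃ A : Finset (Finset (Fin m)), AvoidsF010 p m A ∧ A.card = n}

section Separation

variable {α : Type*} [Fintype α] [DecidableEq α]

lemma card_mul_card_compl_le (S : Finset α) : #S * #Sᶜ ≤ Fintype.card α ^ 2 / 4 := by
  rw [card_compl, Nat.le_div_iff_mul_le (by norm_num)]
  obtain ⟨l, hl⟩ := Nat.exists_eq_add_of_le (card_le_univ S)
  rw [hl, Nat.add_sub_cancel_left]
  nlinarith [sq_nonneg ((#S : ℤ) - l)]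

lemma exists_ne_forall_mem_imp_mem (B : Finset (Finset α))
    (hB : #B * (Fintype.card α ^ 2 / 4) < Fintype.card α * (Fintype.card α - 1)) :
    ∃ i j, i ≠ j ∧ ∀ S ∈ B, i ∈ S → j ∈ S := by
  have hcard : #(B.biUnion fun S => S ×ˢ Sᶜ) < #(univ : Finset α).offDiag :=
    calc #(B.biUnion fun S => S ×ˢ Sᶜ)
        ≤ ∑ S ∈ B, #(S ×ˢ Sᶜ) := card_biUnion_le
      _ ≤ ∑ _S ∈ B, Fintype.card α ^ 2 / 4 :=
          sum_le_sum fun S _ => (card_product S Sᶜ).trans_le (card_mul_card_compl_le S)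
      _ = #B * (Fintype.card α ^ 2 / 4) := by rw [sum_const, smul_eq_mul]
      _ < #(univ : Finset α).offDiag := by rwa [offDiag_card, card_univ, ← Nat.mul_sub_one]
  obtain ⟨⟨i, j⟩, hij, hnot⟩ := exists_mem_notMem_of_card_lt_card hcard
  refine ⟨i, j, (mem_offDiag.mp hij).2.2, fun S hS hi => ?_⟩
  by_contra hj
  exact hnot (mem_biUnion.mpr ⟨S, hS, mem_product.mpr ⟨hi, mem_compl.mpr hj⟩⟩)

lemma card_filter_mem_and_notMem {i j : α} (hij : i ≠ j) :
    #(univ.filter fun Y : Finset α => i ∈ Y ∧ j ∉ Y) = 2 ^ (Fintype.card α - 2) := by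
  rw [show Fintype.card α - 2 = #({i, j}ᶜ : Finset α) by rw [card_compl, card_pair hij],
    ← card_powerset]
  refine card_bij' (fun Y _ => Y.erase i) (fun Y _ => insert i Y) ?_ ?_ ?_ ?_
  · intro Y hY
    simp only [mem_filter, mem_univ, true_and] at hY
    simp only [mem_powerset, subset_iff, mem_erase, mem_compl, mem_insert, mem_singleton]
    grind
  · intro Y hY
    simp only [mem_powerset, subset_iff, mem_compl, mem_insert, mem_singleton] at hY
    simp only [mem_filter, mem_univ, true_and, mem_insert]
    grind
  · intro Y hY
    exact insert_erase (mem_filter.mp hY).2.1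
  · intro Y hY
    exact erase_insert fun hi => by simpa using mem_powerset.mp hY hi

end Separation

lemma not_avoidsF010_of_card_compl_lt {p m : ℕ} {A : Finset (Finset (Fin m))}
    (hp : p ≤ 2 ^ (m - 2)) (hsep : #Aᶜ * (m ^ 2 / 4) < m * (m - 1))
    (hsmall : #Aᶜ < 2 ^ (m - 2)) :
    ¬ AvoidsF010 p m A := by
  intro hA
  have hcount {i j : Fin m} (hij : i ≠ j) :
      #(univ.filter fun Y : Finset (Fin m) => i ∈ Y ∧ j ∉ Y) = 2 ^ (m - 2) := by
    rw [card_filter_mem_and_notMem hij, Fintype.card_fin]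
  obtain ⟨i, j, hij, hB⟩ := exists_ne_forall_mem_imp_mem Aᶜ (by rwa [Fintype.card_fin])
  obtain ⟨X, hX, hXA⟩ :=
    exists_mem_notMem_of_card_lt_card (hsmall.trans_eq (hcount hij.symm).symm)
  rw [mem_filter] at hX
  have hfull :
      univ.filter (fun Y => i ∈ Y ∧ j ∉ Y) ⊆ A.filter fun Y => i ∈ Y ∧ j ∉ Y := by
    intro Y hY
    rw [mem_filter] at hY ⊢
    refine ⟨?_, hY.2⟩
    by_contra hYA
    exact hY.2.2 (hB Y (mem_compl.mpr hYA) hY.2.1)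
  have hle := (card_le_card hfull).trans (hA i j hij ⟨X, by simpa using hXA, hX.2⟩)
  rw [hcount hij] at hle
  have := Nat.one_le_two_pow (n := m - 2)
  omega

lemma forb_eq_of_isGreatest {p m n : ℕ}
    (h : IsGreatest {n | ∃ A : Finset (Finset (Fin m)), AvoidsF010 p m A ∧ #A = n} n) :
    forb m p = n :=
  h.csSup_eq

/-- Each ordered pair `(i, j)` of distinct points has `i ∈ S`, `j ∉ S` for one of the four
removed sets `S`, so at most `7` of the `8` sets `Y` with `i ∈ Y`, `j ∉ Y` remain. -/
def extremalFamily : Finset (Finset (Fin 5)) :=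
  univ \ {{0, 1, 2}, {0, 3, 4}, {1, 3}, {2, 4}}

lemma avoidsF010_extremalFamily : AvoidsF010 8 5 extremalFamily := by
  unfold AvoidsF010; decide

lemma card_le_of_avoidsF010_eight_five {A : Finset (Finset (Fin 5))} (hA : AvoidsF010 8 5 A) :
    #A ≤ 28 := by
  by_contra! hlarge
  have hcompl : #Aᶜ ≤ 3 := by
    rw [card_compl, Fintype.card_finset, Fintype.card_fin]; omega
  exact not_avoidsF010_of_card_compl_lt (by norm_num) (by norm_num; omega) (by norm_num; omega) hA

theorem forb_five_F0810 : forb 5 8 = 28 :=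
  forb_eq_of_isGreatest
    ⟨⟨extremalFamily, avoidsF010_extremalFamily, by decide⟩,
      fun _ ⟨_, hA, hcard⟩ => hcard ▸ card_le_of_avoidsF010_eight_five hA⟩
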